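/- arXiv:1507.03201 — 2 statements merged into one kernel-verified Lean document; each statement's English description precedes it below -/
import Mathlib

section
/- The set K has empty interior in ℝ: K contains no nonempty open interval. -/
open MeasureTheory Finset
open scoped ENNReal NNReal

section aux
variable (q : ℕ → ℝ) (hq0 : q 0 = 1) (hqpos : ∀ k, 0 < q k)
    (hqgrow : ∀ k, q (k + 1) > 3 * q k)

-- the term function
noncomputable def aK (q : ℕ → ℝ) (n : ℕ) : ℝ := 1 / q (n - 1) - 1 / q n

include hqpos hqgrow in
lemma q_mono : Monotone q := by
  apply monotone_nat_of_le_succ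
  intro n
  have := hqgrow n
  nlinarith [hqpos n]

include hq0 hqpos hqgrow in
lemma q_ge_pow : ∀ n, (3:ℝ)^n ≤ q n := by
  intro n
  induction n with
  | zero => simp [hq0]
  | succ n ih =>
    have := hqgrow n
    rw [pow_succ]
    nlinarith [hqpos n]

include hqpos hqgrow in
lemma aK_nonneg : ∀ n, 0 ≤ aK q n := by
  intro n
  have h1 : q (n-1) ≤ q n := q_mono q hqpos hqgrow (Nat.sub_le n 1)
  have h2 : 0 < q (n-1) := hqpos _
  have := one_div_le_one_div_of_le h2 h1
  unfold aK
  linarith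

include hq0 hqpos hqgrow in
lemma aK_sum_range : ∀ N, ∑ n ∈ range (N+1), aK q n = 1 - 1 / q N := by
  intro N
  induction N with
  | zero => simp [aK, hq0]
  | succ N ih =>
    rw [Finset.sum_range_succ, ih]
    simp [aK]

include hq0 hqpos hqgrow in
lemma aK_summable : Summable (aK q) := by
  apply summable_of_sum_range_le (aK_nonneg q hqpos hqgrow) (c := 1)
  intro n
  match n with
  | 0 => simp
  | (N+1) =>
    rw [aK_sum_range q hq0 hqpos hqgrow]
    have := hqpos N
    have : 0 < 1 / q N := by positivity
    linarith

include hq0 hqpos hqgrow in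
lemma aK_tsum : ∑' n, aK q n = 1 := by
  have hs := aK_summable q hq0 hqpos hqgrow
  have h1 : Filter.Tendsto (fun N => ∑ n ∈ range N, aK q n) Filter.atTop (nhds (∑' n, aK q n)) :=
    hs.hasSum.tendsto_sum_nat
  have h2 : Filter.Tendsto (fun N => ∑ n ∈ range (N+1), aK q n) Filter.atTop (nhds (1:ℝ)) := by
    have hq : Filter.Tendsto (fun N => 1 / q N) Filter.atTop (nhds 0) := by
      apply squeeze_zero (fun n => by have := hqpos n; positivity) (g := fun n => (1/3:ℝ)^n)
      · intro n
        rw [one_div_pow]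
        (apply one_div_le_one_div_of_le (by positivity))
        exact q_ge_pow q hq0 hqpos hqgrow n
      · exact tendsto_pow_atTop_nhds_zero_of_lt_one (by norm_num) (by norm_num)
    have := hq.const_sub 1
    simpa [aK_sum_range q hq0 hqpos hqgrow] using this
  have h1' : Filter.Tendsto (fun N => ∑ n ∈ range (N+1), aK q n) Filter.atTop
      (nhds (∑' n, aK q n)) := h1.comp (Filter.tendsto_add_atTop_nat 1)
  exact tendsto_nhds_unique h1' h2

end aux



/-- The sum `h(X) := ∑_{n ∈ X} (1/q(n-1) - 1/q n)` associated to a set `X` of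
positive natural numbers. -/
noncomputable def hK (q : ℕ → ℝ) (X : Set ℕ) : ℝ :=
  ∑' n : ℕ, Set.indicator X (fun m => 1 / q (m - 1) - 1 / q m) n

/-- The Cantor-type set `K`, the range of `h` over subsets of `{1,2,3,…}`. -/
def Kset (q : ℕ → ℝ) : Set ℝ :=
  {x | ∃ X : Set ℕ, (∀ n ∈ X, 1 ≤ n) ∧ hK q X = x}

open Classical in
lemma hK_split (q : ℕ → ℝ) (hq0 : q 0 = 1) (hqpos : ∀ k, 0 < q k)
    (hqgrow : ∀ k, q (k + 1) > 3 * q k) (X : Set ℕ) (N : ℕ) :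
    ∃ t : ℝ, 0 ≤ t ∧ t ≤ 1 / q N ∧
      hK q X = ∑ n ∈ (range (N+1)).filter (· ∈ X), aK q n + t := by
  have hsum := aK_summable q hq0 hqpos hqgrow
  have hnn := aK_nonneg q hqpos hqgrow
  set s : Set ℕ := ↑(range (N+1)) with hs
  have hXeq : X ∩ s = ↑((range (N+1)).filter (· ∈ X)) := by
    ext n; simp [hs, Finset.mem_filter, Finset.mem_range, Set.mem_inter_iff]; tauto
  have hdecomp : Set.indicator X (aK q) = fun n =>
      Set.indicator (X ∩ s) (aK q) n + Set.indicator (X \ s) (aK q) n := by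
    funext n
    have hd : Disjoint (X ∩ s) (X \ s) :=
      Set.disjoint_of_subset_left Set.inter_subset_right Set.disjoint_sdiff_right
    have h := Set.indicator_union_of_disjoint hd (aK q)
    rw [Set.inter_union_diff] at h
    simpa using congrFun h n
  have hsum1 : Summable (Set.indicator (X ∩ s) (aK q)) := hsum.indicator _
  have hsum2 : Summable (Set.indicator (X \ s) (aK q)) := hsum.indicator _
  refine ⟨∑' n, Set.indicator (X \ s) (aK q) n, ?_, ?_, ?_⟩
  · exact tsum_nonneg fun n => Set.indicator_nonneg (fun m _ => hnn m) n
  · -- tail bound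
    have hle : ∀ n, Set.indicator (X \ s) (aK q) n ≤ Set.indicator sᶜ (aK q) n :=
      fun n => Set.indicator_le_indicator_of_subset (Set.diff_subset_compl X s)
        (fun m => hnn m) n
    have hsum3 : Summable (Set.indicator sᶜ (aK q)) := hsum.indicator _
    have h1 : ∑' n, Set.indicator (X \ s) (aK q) n ≤ ∑' n, Set.indicator sᶜ (aK q) n :=
      Summable.tsum_le_tsum hle hsum2 hsum3
    have h2 : ∑' n, Set.indicator sᶜ (aK q) n = 1 / q N := by
      have hdec : (fun n => Set.indicator s (aK q) n + Set.indicator sᶜ (aK q) n) = aK q := by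
        funext n
        have h := Set.indicator_union_of_disjoint (disjoint_compl_right : Disjoint s sᶜ) (aK q)
        rw [Set.union_compl_self, Set.indicator_univ] at h
        simpa using (congrFun h n).symm
      have h3 : ∑' n, Set.indicator s (aK q) n + ∑' n, Set.indicator sᶜ (aK q) n = 1 := by
        rw [← Summable.tsum_add (hsum.indicator s) hsum3]
        calc ∑' n, (Set.indicator s (aK q) n + Set.indicator sᶜ (aK q) n)
            = ∑' n, aK q n := by rw [hdec]
          _ = 1 := aK_tsum q hq0 hqpos hqgrow
      have h4 : ∑' n, Set.indicator s (aK q) n = 1 - 1 / q N := by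
        rw [hs, ← sum_eq_tsum_indicator]
        exact aK_sum_range q hq0 hqpos hqgrow N
      linarith
    linarith
  · have h1 : hK q X = ∑' n, Set.indicator (X ∩ s) (aK q) n
        + ∑' n, Set.indicator (X \ s) (aK q) n := by
      rw [hK]
      show ∑' n, Set.indicator X (aK q) n = _
      rw [hdecomp, Summable.tsum_add hsum1 hsum2]
    rw [h1]
    congr 1
    rw [hXeq, ← sum_eq_tsum_indicator]

open Classical in
lemma Kset_volume_le (q : ℕ → ℝ) (hq0 : q 0 = 1) (hqpos : ∀ k, 0 < q k)
    (hqgrow : ∀ k, q (k + 1) > 3 * q k) (N : ℕ) :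
    volume (Kset q) ≤ ENNReal.ofReal (2 * (2/3 : ℝ)^N) := by
  have hcover : Kset q ⊆ ⋃ F ∈ (range (N+1)).powerset,
      Set.Icc (∑ n ∈ F, aK q n) (∑ n ∈ F, aK q n + 1 / q N) := by
    rintro x ⟨X, -, rfl⟩
    obtain ⟨t, ht0, ht1, ht2⟩ := hK_split q hq0 hqpos hqgrow X N
    refine Set.mem_biUnion (Finset.mem_powerset.mpr (filter_subset (· ∈ X) (range (N+1)))) ?_
    rw [ht2]
    constructor <;> [linarith; linarith]
  calc volume (Kset q) ≤ ∑ F ∈ (range (N+1)).powerset,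
        volume (Set.Icc (∑ n ∈ F, aK q n) (∑ n ∈ F, aK q n + 1 / q N)) :=
      (measure_mono hcover).trans (measure_biUnion_finset_le _ _)
    _ = ∑ F ∈ (range (N+1)).powerset, ENNReal.ofReal (1 / q N) := by
      refine Finset.sum_congr rfl fun F _ => ?_
      rw [Real.volume_Icc]
      congr 1
      ring
    _ = (2^(N+1) : ℕ) * ENNReal.ofReal (1 / q N) := by
      rw [Finset.sum_const, Finset.card_powerset, Finset.card_range, nsmul_eq_mul]
    _ ≤ ENNReal.ofReal (2 * (2/3 : ℝ)^N) := by
      rw [show ((2^(N+1) : ℕ) : ℝ≥0∞) = ENNReal.ofReal ((2:ℝ)^(N+1)) by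
        rw [ENNReal.ofReal_pow (by norm_num)]; norm_num,
        ← ENNReal.ofReal_mul (by positivity)]
      apply ENNReal.ofReal_le_ofReal
      have hq : (3:ℝ)^N ≤ q N := q_ge_pow q hq0 hqpos hqgrow N
      have h1 : 1 / q N ≤ 1 / (3:ℝ)^N :=
        one_div_le_one_div_of_le (by positivity) hq
      calc (2:ℝ)^(N+1) * (1 / q N) ≤ (2:ℝ)^(N+1) * (1 / 3^N) := by
            apply mul_le_mul_of_nonneg_left h1 (by positivity)
        _ = 2 * (2/3)^N := by rw [div_pow, pow_succ]; ring
    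
/-- `K` has empty interior in `ℝ`. -/
theorem stmt_4 (q : ℕ → ℝ) (hq0 : q 0 = 1) (hqpos : ∀ k, 0 < q k)
    (hqgrow : ∀ k, q (k + 1) > 3 * q k) :
    interior (Kset q) = ∅ := by
  have hvol : volume (Kset q) = 0 := by
    refine le_antisymm ?_ zero_le
    have htend : Filter.Tendsto (fun N => ENNReal.ofReal (2 * (2/3 : ℝ)^N))
        Filter.atTop (nhds 0) := by
      rw [show (0 : ℝ≥0∞) = ENNReal.ofReal 0 by simp]
      apply ENNReal.tendsto_ofReal
      have := (tendsto_pow_atTop_nhds_zero_of_lt_one (by norm_num : (0:ℝ) ≤ 2/3)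
        (by norm_num : (2/3:ℝ) < 1)).const_mul (2:ℝ)
      simpa using this
    exact ge_of_tendsto htend (Filter.Eventually.of_forall fun N =>
      Kset_volume_le q hq0 hqpos hqgrow N)
  by_contra h
  have hne : (interior (Kset q)).Nonempty := Set.nonempty_iff_ne_empty.mpr h
  have hpos : 0 < volume (interior (Kset q)) :=
    isOpen_interior.measure_pos volume hne
  have hle : volume (interior (Kset q)) ≤ volume (Kset q) :=
    measure_mono interior_subset
  rw [hvol] at hle
  exact absurd (le_antisymm hle zero_le) hpos.ne'
end

section
/- Gap immediately to the left of a truncation point (the concrete form of Lemma 4.13): let X ⊆ {1,2,3,…} and m ≥ 1, and suppose X ∩ {1,…,m} is nonempty with greatest element b. Then the open interval ( h(X ∩ {1,…,m}) − 1/q (b−1) + 2/q b, h(X ∩ {1,…,m}) ) is disjoint from K, and both of its endpoints belong to K. -/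
open Set Filter Topology

section aux

variable {q : ℕ → ℝ}

private noncomputable def fK (q : ℕ → ℝ) (n : ℕ) : ℝ := 1 / q (n - 1) - 1 / q n

private lemma hK_def (q : ℕ → ℝ) (S : Set ℕ) :
    (∑' n : ℕ, Set.indicator S (fun m => 1 / q (m - 1) - 1 / q m) n)
      = ∑' n, S.indicator (fK q) n := rfl

private lemma q_mono_s14 (hqpos : ∀ k, 0 < q k) (hqgrow : ∀ k, q (k + 1) > 3 * q k) :
    Monotone q := by
  apply monotone_nat_of_le_succ
  intro n
  nlinarith [hqpos n, hqgrow n]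

private lemma fK_nonneg (hqpos : ∀ k, 0 < q k) (hqgrow : ∀ k, q (k + 1) > 3 * q k)
    (n : ℕ) : 0 ≤ fK q n := by
  rcases n with _ | n
  · simp [fK]
  · have h1 : q n ≤ q (n + 1) := q_mono_s14 hqpos hqgrow (Nat.le_succ n)
    have := hqpos n
    have := hqpos (n + 1)
    simp only [fK, Nat.add_sub_cancel]
    have : 1 / q (n + 1) ≤ 1 / q n := one_div_le_one_div_of_le ‹0 < q n› h1
    linarith

/-- The key inequality: for `n ≥ 1`, `fK q n ≥ 1 / q n`. -/
private lemma fK_key (hqpos : ∀ k, 0 < q k) (hqgrow : ∀ k, q (k + 1) > 3 * q k)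
    {n : ℕ} (hn : 1 ≤ n) : 1 / q n ≤ fK q n := by
  obtain ⟨j, rfl⟩ := Nat.exists_eq_add_of_le hn
  have h1 : q (j + 1) > 3 * q j := hqgrow j
  have h2 := hqpos j
  have h3 := hqpos (j + 1)
  simp only [fK, Nat.add_sub_cancel, add_comm 1 j]
  rw [le_sub_iff_add_le]
  have h4 : (1:ℝ) / q (j + 1) + 1 / q (j + 1) = 2 / q (j + 1) := by ring
  rw [h4, div_le_div_iff₀ h3 h2]
  nlinarith

private lemma sum_range_fK (hq0 : q 0 = 1) (hqpos : ∀ k, 0 < q k) (n : ℕ) :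
    ∑ i ∈ Finset.range (n + 1), fK q i = 1 - 1 / q n := by
  induction n with
  | zero => simp [fK, hq0]
  | succ n ih =>
    rw [Finset.sum_range_succ, ih]
    simp only [fK, Nat.add_sub_cancel]
    ring

private lemma summable_fK (hq0 : q 0 = 1) (hqpos : ∀ k, 0 < q k)
    (hqgrow : ∀ k, q (k + 1) > 3 * q k) : Summable (fK q) := by
  apply summable_of_sum_range_le (c := 1) (fK_nonneg hqpos hqgrow)
  intro n
  rcases n with _ | n
  · simp
  · rw [sum_range_fK hq0 hqpos]
    have h := hqpos n
    have : 0 < 1 / q n := by positivity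
    linarith

private lemma summable_ind (hq0 : q 0 = 1) (hqpos : ∀ k, 0 < q k)
    (hqgrow : ∀ k, q (k + 1) > 3 * q k) (S : Set ℕ) : Summable (S.indicator (fK q)) :=
  (summable_fK hq0 hqpos hqgrow).indicator S

private lemma three_pow_le (hq0 : q 0 = 1) (hqpos : ∀ k, 0 < q k)
    (hqgrow : ∀ k, q (k + 1) > 3 * q k) (n : ℕ) : (3 : ℝ) ^ n ≤ q n := by
  induction n with
  | zero => simp [hq0]
  | succ n ih =>
    have := hqgrow n
    calc (3 : ℝ) ^ (n + 1) = 3 * 3 ^ n := by ring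
    _ ≤ 3 * q n := by nlinarith
    _ ≤ q (n + 1) := le_of_lt this

private lemma tendsto_inv_q (hq0 : q 0 = 1) (hqpos : ∀ k, 0 < q k)
    (hqgrow : ∀ k, q (k + 1) > 3 * q k) :
    Tendsto (fun n => 1 / q n) atTop (𝓝 0) := by
  apply squeeze_zero (g := fun n => (1 / 3 : ℝ) ^ n) (fun n => by have := hqpos n; positivity)
  · intro n
    have h3 : (0:ℝ) < 3 ^ n := by positivity
    have := three_pow_le hq0 hqpos hqgrow n
    rw [one_div_pow]
    exact one_div_le_one_div_of_le h3 this
  · exact tendsto_pow_atTop_nhds_zero_of_lt_one (by norm_num) (by norm_num)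

private lemma hasSum_fK (hq0 : q 0 = 1) (hqpos : ∀ k, 0 < q k)
    (hqgrow : ∀ k, q (k + 1) > 3 * q k) : HasSum (fK q) 1 := by
  rw [hasSum_iff_tendsto_nat_of_nonneg (fK_nonneg hqpos hqgrow)]
  rw [← tendsto_add_atTop_iff_nat 1]
  have : (fun n => ∑ i ∈ Finset.range (n + 1), fK q i) = fun n => 1 - 1 / q n := by
    funext n; exact sum_range_fK hq0 hqpos n
  rw [this]
  have := (tendsto_inv_q hq0 hqpos hqgrow).const_sub 1
  simpa using this

private lemma hK_eq_tsum (q : ℕ → ℝ) (S : Set ℕ) : hK q S = ∑' n, S.indicator (fK q) n := rfl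

private lemma hK_nonneg (hqpos : ∀ k, 0 < q k) (hqgrow : ∀ k, q (k + 1) > 3 * q k)
    (S : Set ℕ) : 0 ≤ hK q S := by
  rw [hK_eq_tsum]
  exact tsum_nonneg fun n => Set.indicator_nonneg (fun k _ => fK_nonneg hqpos hqgrow k) n

private lemma hK_mono (hq0 : q 0 = 1) (hqpos : ∀ k, 0 < q k)
    (hqgrow : ∀ k, q (k + 1) > 3 * q k) {S T : Set ℕ} (h : S ⊆ T) : hK q S ≤ hK q T := by
  rw [hK_eq_tsum, hK_eq_tsum]
  exact Summable.tsum_le_tsum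
    (fun n => Set.indicator_le_indicator_of_subset h (fun k => fK_nonneg hqpos hqgrow k) n)
    (summable_ind hq0 hqpos hqgrow S) (summable_ind hq0 hqpos hqgrow T)

private lemma hK_union (hq0 : q 0 = 1) (hqpos : ∀ k, 0 < q k)
    (hqgrow : ∀ k, q (k + 1) > 3 * q k) {S T : Set ℕ} (h : Disjoint S T) :
    hK q (S ∪ T) = hK q S + hK q T := by
  simp only [hK_eq_tsum]
  rw [← Summable.tsum_add (summable_ind hq0 hqpos hqgrow S) (summable_ind hq0 hqpos hqgrow T)]
  congr 1
  funext n
  rw [Set.indicator_union_of_disjoint h]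

private lemma hK_finset (q : ℕ → ℝ) (t : Finset ℕ) : hK q ↑t = ∑ n ∈ t, fK q n := by
  rw [hK_eq_tsum, tsum_eq_sum (s := t) (fun b hb => Set.indicator_of_notMem (by simpa using hb) _)]
  exact Finset.sum_congr rfl fun n hn => Set.indicator_of_mem (by simpa using hn) _

private lemma hK_singleton (q : ℕ → ℝ) (n : ℕ) : hK q {n} = fK q n := by
  have := hK_finset q {n}
  simpa using this

private lemma hK_empty (q : ℕ → ℝ) : hK q ∅ = 0 := by
  have := hK_finset q ∅
  simpa using this

private lemma hK_univ (hq0 : q 0 = 1) (hqpos : ∀ k, 0 < q k)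
    (hqgrow : ∀ k, q (k + 1) > 3 * q k) : hK q Set.univ = 1 := by
  rw [hK_eq_tsum]
  simp only [Set.indicator_univ]
  exact (hasSum_fK hq0 hqpos hqgrow).tsum_eq

private lemma hK_Iic (hq0 : q 0 = 1) (hqpos : ∀ k, 0 < q k)
    (hqgrow : ∀ k, q (k + 1) > 3 * q k) (b : ℕ) : hK q (Set.Iic b) = 1 - 1 / q b := by
  have h1 : (↑(Finset.Iic b) : Set ℕ) = Set.Iic b := Finset.coe_Iic b
  rw [← h1, hK_finset]
  rw [show Finset.Iic b = Finset.range (b + 1) by ext x; simp [Nat.lt_succ_iff]]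
  exact sum_range_fK hq0 hqpos b

private lemma hK_Ioi (hq0 : q 0 = 1) (hqpos : ∀ k, 0 < q k)
    (hqgrow : ∀ k, q (k + 1) > 3 * q k) (b : ℕ) : hK q (Set.Ioi b) = 1 / q b := by
  have hu : Set.Iic b ∪ Set.Ioi b = Set.univ := Set.Iic_union_Ioi
  have hd : Disjoint (Set.Iic b) (Set.Ioi b) := Set.Iic_disjoint_Ioi le_rfl
  have := hK_union hq0 hqpos hqgrow hd
  rw [hu, hK_univ hq0 hqpos hqgrow, hK_Iic hq0 hqpos hqgrow] at this
  linarith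

private lemma hK_split_s14 (hq0 : q 0 = 1) (hqpos : ∀ k, 0 < q k)
    (hqgrow : ∀ k, q (k + 1) > 3 * q k) (S : Set ℕ) (n : ℕ) :
    hK q S = hK q (S ∩ Set.Iio n) + hK q (S ∩ Set.Ici n) := by
  rw [← hK_union hq0 hqpos hqgrow (Set.disjoint_left.2 fun a ha hb => not_lt.2 (Set.mem_Ici.1 hb.2) (Set.mem_Iio.1 ha.2))]
  congr 1
  rw [← Set.inter_union_distrib_left, Set.Iio_union_Ici, Set.inter_univ]

end aux



/-- Gap immediately to the left of a truncation point: if `b` is the greatest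
element of the nonempty set `X ∩ {1,…,m}` (with `m ≥ 1`), then the open
interval `(h(X ∩ {1,…,m}) - 1/q(b-1) + 2/q b, h(X ∩ {1,…,m}))` is disjoint
from `K` and both of its endpoints belong to `K`. -/
theorem stmt_14 (q : ℕ → ℝ) (hq0 : q 0 = 1) (hqpos : ∀ k, 0 < q k)
    (hqgrow : ∀ k, q (k + 1) > 3 * q k)
    (X : Set ℕ) (hX : ∀ n ∈ X, 1 ≤ n) (m : ℕ) (hm : 1 ≤ m)
    (b : ℕ) (hb : IsGreatest (X ∩ Set.Icc 1 m) b) :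
    Set.Ioo (hK q (X ∩ Set.Icc 1 m) - 1 / q (b - 1) + 2 / q b)
        (hK q (X ∩ Set.Icc 1 m)) ∩ Kset q = ∅ ∧
    hK q (X ∩ Set.Icc 1 m) - 1 / q (b - 1) + 2 / q b ∈ Kset q ∧
    hK q (X ∩ Set.Icc 1 m) ∈ Kset q := by
  set Y : Set ℕ := X ∩ Set.Icc 1 m with hYdef
  obtain ⟨hbY, hbub⟩ := hb
  have hb1 : 1 ≤ b := hbY.2.1
  have hYub : ∀ k ∈ Y, k ≤ b := fun k hk => hbub hk
  have hfb : fK q b = 1 / q (b - 1) - 1 / q b := rfl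
  have hqbpos : 0 < 1 / q b := by have := hqpos b; positivity
  have htwo : (2:ℝ) / q b = 1 / q b + 1 / q b := by ring
  -- splitting off the top point b
  have hYsplit : hK q Y = hK q (Y \ {b}) + fK q b := by
    have h1 : Y = (Y \ {b}) ∪ {b} := by
      rw [Set.diff_union_self]
      exact (Set.union_eq_self_of_subset_right (Set.singleton_subset_iff.2 hbY)).symm
    conv_lhs => rw [h1]
    rw [hK_union hq0 hqpos hqgrow (Set.disjoint_left.2 fun a ha => ha.2), hK_singleton]
  -- the left endpoint is hK of (Y \ {b}) ∪ Ioi b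
  have hleft : hK q ((Y \ {b}) ∪ Set.Ioi b) = hK q Y - 1 / q (b - 1) + 2 / q b := by
    have hd : Disjoint (Y \ {b}) (Set.Ioi b) := by
      rw [Set.disjoint_left]
      intro a ha hb'
      exact absurd (hYub a ha.1) (not_le.2 hb')
    rw [hK_union hq0 hqpos hqgrow hd, hK_Ioi hq0 hqpos hqgrow]
    rw [hfb] at hYsplit
    rw [hYsplit]
    ring
  refine ⟨?_, ⟨(Y \ {b}) ∪ Set.Ioi b, ?_, hleft⟩, ⟨Y, fun n hn => hn.2.1, rfl⟩⟩
  · -- disjointness from K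
    rw [Set.eq_empty_iff_forall_notMem]
    rintro x ⟨⟨hx1, hx2⟩, Z, hZ1, rfl⟩
    rcases eq_or_ne Z Y with rfl | hne
    · exact lt_irrefl _ hx2
    set D : Set ℕ := {k | (k ∈ Z ∧ k ∉ Y) ∨ (k ∈ Y ∧ k ∉ Z)} with hDdef
    have hDne : D.Nonempty := by
      by_contra h
      rw [Set.not_nonempty_iff_eq_empty] at h
      apply hne
      ext k
      have hk : k ∉ D := h ▸ Set.notMem_empty k
      simp only [hDdef, Set.mem_setOf_eq] at hk
      tauto
    set n := sInf D with hndef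
    have hn : n ∈ D := Nat.sInf_mem hDne
    have hlow : ∀ k, k < n → (k ∈ Z ↔ k ∈ Y) := by
      intro k hk
      have := Nat.notMem_of_lt_sInf hk
      simp only [hDdef, Set.mem_setOf_eq] at this
      tauto
    have hZY : Z ∩ Set.Iio n = Y ∩ Set.Iio n := by
      ext k
      simp only [Set.mem_inter_iff, Set.mem_Iio]
      exact ⟨fun h => ⟨(hlow k h.2).1 h.1, h.2⟩, fun h => ⟨(hlow k h.2).2 h.1, h.2⟩⟩
    have eZ : hK q Z = hK q (Y ∩ Set.Iio n) + hK q (Z ∩ Set.Ici n) := by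
      rw [hK_split_s14 hq0 hqpos hqgrow Z n, hZY]
    have eY : hK q Y = hK q (Y ∩ Set.Iio n) + hK q (Y ∩ Set.Ici n) :=
      hK_split_s14 hq0 hqpos hqgrow Y n
    rcases hn with ⟨hnZ, hnY⟩ | ⟨hnY, hnZ⟩
    · -- n ∈ Z \ Y : then hK Z ≥ hK Y, contradicting hx2
      have hn1 : 1 ≤ n := hZ1 n hnZ
      have e2 : fK q n ≤ hK q (Z ∩ Set.Ici n) := by
        rw [← hK_singleton q n]
        exact hK_mono hq0 hqpos hqgrow (Set.singleton_subset_iff.2 ⟨hnZ, Set.mem_Ici.2 le_rfl⟩)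
      have e4 : hK q (Y ∩ Set.Ici n) ≤ 1 / q n := by
        have hsub : Y ∩ Set.Ici n ⊆ Set.Ioi n := by
          rintro k ⟨hkY, hkn⟩
          exact lt_of_le_of_ne (Set.mem_Ici.1 hkn) (by rintro rfl; exact hnY hkY)
        calc hK q (Y ∩ Set.Ici n) ≤ hK q (Set.Ioi n) := hK_mono hq0 hqpos hqgrow hsub
        _ = 1 / q n := hK_Ioi hq0 hqpos hqgrow n
      have e5 : 1 / q n ≤ fK q n := fK_key hqpos hqgrow hn1
      linarith
    · -- n ∈ Y \ Z : then hK Z ≤ left endpoint, contradicting hx1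
      have hn1 : 1 ≤ n := hnY.2.1
      have hnb : n ≤ b := hYub n hnY
      have e2 : hK q (Z ∩ Set.Ici n) ≤ 1 / q n := by
        have hsub : Z ∩ Set.Ici n ⊆ Set.Ioi n := by
          rintro k ⟨hkZ, hkn⟩
          exact lt_of_le_of_ne (Set.mem_Ici.1 hkn) (by rintro rfl; exact hnZ hkZ)
        calc hK q (Z ∩ Set.Ici n) ≤ hK q (Set.Ioi n) := hK_mono hq0 hqpos hqgrow hsub
        _ = 1 / q n := hK_Ioi hq0 hqpos hqgrow n
      have e4 : hK q (Y ∩ Set.Ici n) = fK q n + hK q (Y ∩ Set.Ioi n) := by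
        have h1 : Y ∩ Set.Ici n = {n} ∪ (Y ∩ Set.Ioi n) := by
          ext k
          simp only [Set.mem_inter_iff, Set.mem_Ici, Set.mem_union, Set.mem_singleton_iff,
            Set.mem_Ioi]
          constructor
          · rintro ⟨hkY, hkn⟩
            rcases eq_or_lt_of_le hkn with h | h
            · exact Or.inl h.symm
            · exact Or.inr ⟨hkY, h⟩
          · rintro (rfl | ⟨hkY, hkn⟩)
            · exact ⟨hnY, le_rfl⟩
            · exact ⟨hkY, le_of_lt hkn⟩
        have hd2 : Disjoint ({n} : Set ℕ) (Y ∩ Set.Ioi n) := by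
          rw [Set.disjoint_left]
          rintro a rfl hb'
          exact lt_irrefl _ (Set.mem_Ioi.1 hb'.2)
        rw [h1, hK_union hq0 hqpos hqgrow hd2, hK_singleton]
      have e5 : 1 / q n ≤ fK q n := fK_key hqpos hqgrow hn1
      rcases eq_or_lt_of_le hnb with rfl | hlt
      · -- n = b
        have hempty : Y ∩ Set.Ioi n = ∅ := by
          rw [Set.eq_empty_iff_forall_notMem]
          rintro k ⟨hkY, hkn⟩
          exact absurd (hYub k hkY) (not_le.2 hkn)
        rw [hempty, hK_empty] at e4
        rw [hfb] at e4
        linarith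
      · -- n < b
        have e6 : fK q b ≤ hK q (Y ∩ Set.Ioi n) := by
          rw [← hK_singleton q b]
          exact hK_mono hq0 hqpos hqgrow (Set.singleton_subset_iff.2 ⟨hbY, Set.mem_Ioi.2 hlt⟩)
        rw [hfb] at e6
        linarith
  · -- all elements of the left-endpoint set are ≥ 1
    rintro k (hk | hk)
    · exact hk.1.2.1
    · exact le_trans hb1 (le_of_lt hk)
end
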